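/- arXiv:0906.5083 — 2 statements merged into one kernel-verified Lean document; each statement's English description precedes it below -/
import Mathlib

section
/- Let D be a Lévy subordinator with Laplace exponent φ, not identically zero (so φ(λ) > 0 for λ > 0 and D(s) → ∞ a.s.), and let E(t) = inf{ s ≥ 0 : D(s) > t } be its inverse. For λ₁,…,λₙ > 0 and 0 = s₀ ≤ s₁ ≤ s₂ ≤ ⋯ ≤ sₙ, the Laplace transform of the n-time tail distribution satisfies the closed-form expression: ∫_{ℝⁿ≥0} exp(−Σᵢλᵢtᵢ) · P[E(tᵢ) > sᵢ, i = 1,…,n] dt₁⋯dtₙ = (λ₁⋯λₙ)⁻¹ · exp( −Σᵢ₌₁ⁿ φ(λᵢ + ⋯ + λₙ)·(sᵢ − sᵢ₋₁) ). -/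
open Filter MeasureTheory ProbabilityTheory Set

/-- A Lévy subordinator `D` on a probability space `(Ω, P)` with Laplace exponent `φ`:
`D 0 = 0` a.s., sample paths a.s. nonnegative, nondecreasing and right-continuous,
independent and stationary increments, and `𝔼[exp(−λ D s)] = exp(−s φ(λ))` for all
`λ, s ≥ 0` (with `φ` taking nonnegative values on `[0,∞)`). -/
structure IsLevySubordinator {Ω : Type*} [MeasurableSpace Ω] (P : Measure Ω)
    (D : ℝ → Ω → ℝ) (φ : ℝ → ℝ) : Prop where
  isProbability : IsProbabilityMeasure P
  measurable : ∀ s : ℝ, Measurable (D s)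
  init : ∀ᵐ ω ∂P, D 0 ω = 0
  mono : ∀ᵐ ω ∂P, MonotoneOn (fun s => D s ω) (Ici 0)
  nonneg : ∀ᵐ ω ∂P, ∀ s : ℝ, 0 ≤ s → 0 ≤ D s ω
  rightCont : ∀ᵐ ω ∂P, ∀ s : ℝ, 0 ≤ s →
    ContinuousWithinAt (fun u => D u ω) (Ici s) s
  indepIncrements : ∀ (n : ℕ) (s : ℕ → ℝ), s 0 = 0 → Monotone s →
    iIndepFun
      (fun i : Fin n => fun ω => D (s (i + 1)) ω - D (s i) ω) P
  stationaryIncrements : ∀ s t : ℝ, 0 ≤ s → s ≤ t →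
    P.map (fun ω => D t ω - D s ω) = P.map (D (t - s))
  phi_nonneg : ∀ lam : ℝ, 0 ≤ lam → 0 ≤ φ lam
  laplace : ∀ lam s : ℝ, 0 ≤ lam → 0 ≤ s →
    ∫ ω, Real.exp (-(lam * D s ω)) ∂P = Real.exp (-(s * φ lam))

/-!
For fixed `ω`, integrating `exp (-∑ λᵢ tᵢ)` over the box `{tᵢ ≥ D sᵢ}` gives
`(∏ λᵢ)⁻¹ exp (-∑ λᵢ D sᵢ)`, so by Fubini the left side is `(∏ λᵢ)⁻¹ 𝔼[exp (-∑ λᵢ D sᵢ)]`.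
Summation by parts rewrites `∑ λᵢ D sᵢ` as `∑ (λᵢ + ⋯ + λₙ) (D sᵢ - D sᵢ₋₁)`, and independence and
stationarity of the increments factor the expectation into `∏ exp (-φ (λᵢ + ⋯ + λₙ) (sᵢ - sᵢ₋₁))`.
Finally, right-continuity and unboundedness of the paths squeeze `{E tᵢ > sᵢ}` between
`{D sᵢ < tᵢ}` and `{D sᵢ ≤ tᵢ}`, whose Laplace transforms agree because the two events differ
only for `t` in a Lebesgue-null set.
-/

theorem Fin.sum_Iic_succ_sub_castSucc {M : Type*} [AddCommGroup M] {n : ℕ}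
    (a : Fin (n + 1) → M) (j : Fin n) :
    ∑ i ∈ Finset.Iic j, (a i.succ - a i.castSucc) = a j.succ - a 0 := by
  obtain ⟨m, rfl⟩ : ∃ m, n = m + 1 := ⟨n - 1, by have := j.pos; omega⟩
  induction j using Fin.induction with
  | zero =>
    rw [show (0 : Fin (m + 1)) = ⊥ from rfl, Finset.Iic_bot, Finset.sum_singleton]
    rfl
  | succ j ih =>
    have hIic : Finset.Iic j.succ = insert j.succ (Finset.Iic j.castSucc) := by
      ext i
      simp only [Finset.mem_Iic, Finset.mem_insert, Fin.le_def, Fin.ext_iff, Fin.val_succ,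
        Fin.val_castSucc]
      omega
    rw [hIic, Finset.sum_insert (by simp), ih, Fin.succ_castSucc]
    abel

theorem Fin.sum_Ici_mul_succ_sub_castSucc {R : Type*} [CommRing R] {n : ℕ} (lam : Fin n → R)
    (a : Fin (n + 1) → R) :
    ∑ i, (∑ j ∈ Finset.Ici i, lam j) * (a i.succ - a i.castSucc)
      = ∑ j, lam j * (a j.succ - a 0) := by
  simp_rw [Finset.sum_mul]
  rw [Finset.sum_comm' (t' := Finset.univ) (s' := Finset.Iic) (by simp)]
  simp_rw [← Finset.mul_sum, Fin.sum_Iic_succ_sub_castSucc]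

theorem integral_eq_of_ae_le_of_ae_le {α : Type*} [MeasurableSpace α] {μ : Measure α}
    {f g h : α → ℝ} (hf : Integrable f μ) (hh : Integrable h μ) (hfg : f ≤ᵐ[μ] g)
    (hgh : g ≤ᵐ[μ] h) (hfh : ∫ x, f x ∂μ = ∫ x, h x ∂μ) :
    ∫ x, g x ∂μ = ∫ x, h x ∂μ := by
  have hfh_ae : f =ᵐ[μ] h := (integral_eq_iff_of_ae_le hf hh (hfg.trans hgh)).1 hfh
  refine integral_congr_ae ?_
  filter_upwards [hfg, hgh, hfh_ae] with x h₁ h₂ h₃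
  linarith

theorem integrableOn_exp_neg_mul_Ici {b : ℝ} (hb : 0 < b) (c : ℝ) :
    IntegrableOn (fun x => Real.exp (-(b * x))) (Ici c) := by
  simpa [neg_mul] using
    (integrableOn_Ici_iff_integrableOn_Ioi).2 (integrableOn_exp_mul_Ioi (neg_neg_of_pos hb) c)

theorem setIntegral_exp_neg_mul_of_Ioi_subset {b c : ℝ} (hb : 0 < b) {A : Set ℝ}
    (hIoi : Ioi c ⊆ A) (hIci : A ⊆ Ici c) :
    ∫ x in A, Real.exp (-(b * x)) = b⁻¹ * Real.exp (-(b * c)) := by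
  have hA : A =ᵐ[volume] Ioi c :=
    (hIci.eventuallyLE.trans Ioi_ae_eq_Ici.symm.le).antisymm hIoi.eventuallyLE
  rw [setIntegral_congr_set hA]
  simpa [neg_mul, div_eq_inv_mul, mul_comm] using integral_exp_mul_Ioi (neg_neg_of_pos hb) c

theorem exp_neg_sum_mul_eq_prod {ι : Type*} [Fintype ι] (lam t : ι → ℝ) :
    Real.exp (-∑ i, lam i * t i) = ∏ i, Real.exp (-(lam i * t i)) := by
  rw [← Finset.sum_neg_distrib, Real.exp_sum]

section Box

variable {ι : Type*} [Fintype ι] {E : Type*} [MeasurableSpace E] {μ : ι → Measure E}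
  [∀ i, SigmaFinite (μ i)] {𝕜 : Type*} [RCLike 𝕜]

theorem IntegrableOn.univ_pi_prod {f : ι → E → 𝕜} {A : ι → Set E}
    (hf : ∀ i, IntegrableOn (f i) (A i) (μ i)) :
    IntegrableOn (fun x => ∏ i, f i (x i)) (univ.pi A) (Measure.pi μ) := by
  rw [IntegrableOn, Measure.restrict_pi_pi]
  exact Integrable.fintype_prod hf

theorem setIntegral_univ_pi_prod (f : ι → E → 𝕜) (A : ι → Set E) :
    ∫ x in univ.pi A, ∏ i, f i (x i) ∂Measure.pi μ = ∏ i, ∫ x in A i, f i x ∂μ i := by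
  rw [Measure.restrict_pi_pi, integral_fintype_prod_eq_prod]

end Box

section ExpBox

variable {ι : Type*} [Fintype ι] {lam : ι → ℝ}

theorem integrableOn_exp_neg_sum_mul (hlam : ∀ i, 0 < lam i) :
    IntegrableOn (fun t : ι → ℝ => Real.exp (-∑ i, lam i * t i)) {t | ∀ i, 0 ≤ t i} := by
  have hbox : {t : ι → ℝ | ∀ i, 0 ≤ t i} = univ.pi fun _ => Ici 0 := by
    ext; simp [Pi.le_def]
  simp_rw [hbox, exp_neg_sum_mul_eq_prod, volume_pi]
  exact IntegrableOn.univ_pi_prod fun i => integrableOn_exp_neg_mul_Ici (hlam i) 0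

theorem setIntegral_exp_neg_sum_mul_univ_pi (hlam : ∀ i, 0 < lam i) {A : ι → Set ℝ} {c : ι → ℝ}
    (hIoi : ∀ i, Ioi (c i) ⊆ A i) (hIci : ∀ i, A i ⊆ Ici (c i)) :
    ∫ t in univ.pi A, Real.exp (-∑ i, lam i * t i)
      = (∏ i, lam i)⁻¹ * Real.exp (-∑ i, lam i * c i) := by
  simp_rw [exp_neg_sum_mul_eq_prod]
  rw [volume_pi, setIntegral_univ_pi_prod fun i x => Real.exp (-(lam i * x))]
  simp_rw [setIntegral_exp_neg_mul_of_Ioi_subset (hlam _) (hIoi _) (hIci _),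
    Finset.prod_mul_distrib, Finset.prod_inv_distrib]

end ExpBox

section Tail

variable {Ω ι : Type*} [MeasurableSpace Ω] [Fintype ι] {P : Measure Ω} [IsFiniteMeasure P]
  {X : ι → Ω → ℝ} {S : Set (ℝ × ℝ)} {lam : ι → ℝ}

theorem measurableSet_setOf_forall_mk_mem (hX : ∀ i, Measurable (X i)) (hS : MeasurableSet S) :
    MeasurableSet {p : (ι → ℝ) × Ω | ∀ i, (X i p.2, p.1 i) ∈ S} := by
  simp only [Set.ofPred_forall]
  exact .iInter fun i =>
    (((hX i).comp measurable_snd).prodMk ((measurable_pi_apply i).comp measurable_fst)) hS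

theorem integrableOn_exp_neg_sum_mul_measureReal (hX : ∀ i, Measurable (X i))
    (hS : MeasurableSet S) (hlam : ∀ i, 0 < lam i) :
    IntegrableOn
      (fun t : ι → ℝ => Real.exp (-∑ i, lam i * t i) * P.real {ω | ∀ i, (X i ω, t i) ∈ S})
      {t | ∀ i, 0 ≤ t i} := by
  have hmeas : Measurable fun t : ι → ℝ => P.real {ω | ∀ i, (X i ω, t i) ∈ S} :=
    (measurable_measure_prodMk_left (measurableSet_setOf_forall_mk_mem hX hS)).ennreal_toReal
  refine ((integrableOn_exp_neg_sum_mul hlam).mul_const (P.real univ)).mono'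
    ((by fun_prop : Measurable _).mul hmeas).aestronglyMeasurable (ae_of_all _ fun t => ?_)
  rw [norm_mul, Real.norm_of_nonneg (Real.exp_pos _).le, Real.norm_of_nonneg measureReal_nonneg]
  exact mul_le_mul_of_nonneg_left (measureReal_mono (subset_univ _)) (Real.exp_pos _).le

theorem integral_exp_neg_sum_mul_measureReal (hX : ∀ i, Measurable (X i))
    (hX0 : ∀ᵐ ω ∂P, ∀ i, 0 ≤ X i ω) (hS : MeasurableSet S)
    (hlt : ∀ x y, x < y → (x, y) ∈ S) (hle : ∀ x y, (x, y) ∈ S → x ≤ y) (hlam : ∀ i, 0 < lam i) :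
    ∫ t in {t : ι → ℝ | ∀ i, 0 ≤ t i},
        Real.exp (-∑ i, lam i * t i) * P.real {ω | ∀ i, (X i ω, t i) ∈ S}
      = (∏ i, lam i)⁻¹ * ∫ ω, Real.exp (-∑ i, lam i * X i ω) ∂P := by
  set Q := {t : ι → ℝ | ∀ i, 0 ≤ t i}
  set T := {p : (ι → ℝ) × Ω | ∀ i, (X i p.2, p.1 i) ∈ S}
  set F := T.indicator fun p => Real.exp (-∑ i, lam i * p.1 i)
  have hT : MeasurableSet T := measurableSet_setOf_forall_mk_mem hX hS
  have hF : Integrable F ((volume.restrict Q).prod P) :=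
    ((integrableOn_exp_neg_sum_mul hlam).comp_fst P).indicator hT
  have inner : ∀ᵐ ω ∂P, ∫ t in Q, F (t, ω)
      = (∏ i, lam i)⁻¹ * Real.exp (-∑ i, lam i * X i ω) := by
    filter_upwards [hX0] with ω hω
    have hbox : Q ∩ (fun t => (t, ω)) ⁻¹' T = univ.pi fun i => {y | (X i ω, y) ∈ S} := by
      ext t
      simp only [Q, T, mem_inter_iff, mem_preimage, mem_ofPred_eq, mem_univ_pi]
      exact ⟨fun ht => ht.2, fun ht => ⟨fun i => (hω i).trans (hle _ _ (ht i)), ht⟩⟩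
    change ∫ t in Q,
      ((fun t => (t, ω)) ⁻¹' T).indicator (fun t => Real.exp (-∑ i, lam i * t i)) t = _
    rw [setIntegral_indicator (measurable_prodMk_right hT), hbox]
    exact setIntegral_exp_neg_sum_mul_univ_pi hlam (fun i y => hlt _ _) (fun i y => hle _ _)
  calc _ = ∫ t in Q, ∫ ω, F (t, ω) ∂P := by
        refine integral_congr_ae (ae_of_all _ fun t => ?_)
        change _ = ∫ ω, (Prod.mk t ⁻¹' T).indicator (fun _ => Real.exp (-∑ i, lam i * t i)) ω ∂P
        rw [integral_indicator_const _ (measurable_prodMk_left hT), smul_eq_mul, mul_comm]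
        rfl
    _ = ∫ ω, (∫ t in Q, F (t, ω)) ∂P := integral_integral_swap (f := fun t ω => F (t, ω)) hF
    _ = _ := by rw [integral_congr_ae inner, integral_const_mul]

end Tail

section FirstPassage

variable {f : ℝ → ℝ} {s t : ℝ}

theorem le_of_lt_sInf_setOf_lt (hs : 0 ≤ s) (h : s < sInf {u | 0 ≤ u ∧ t < f u}) : f s ≤ t := by
  by_contra! hts
  exact (csInf_le (⟨0, fun _ hu => hu.1⟩ : BddBelow {u | 0 ≤ u ∧ t < f u}) ⟨hs, hts⟩).not_gt h

theorem lt_sInf_setOf_lt (hf : MonotoneOn f (Ici 0)) (hfs : ContinuousWithinAt f (Ici s) s)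
    (hne : ∃ u, 0 ≤ u ∧ t < f u) (hs : 0 ≤ s) (h : f s < t) :
    s < sInf {u | 0 ≤ u ∧ t < f u} := by
  obtain ⟨v, hfv, hsv⟩ : ∃ v, f v < t ∧ s < v :=
    ((hfs.eventually (Iio_mem_nhds h)).filter_mono (nhdsWithin_mono _ Ioi_subset_Ici_self)
      |>.and self_mem_nhdsWithin).exists
  refine hsv.trans_le (le_csInf hne fun u hu => ?_)
  by_contra! huv
  exact (hf hu.1 (hs.trans hsv.le) huv.le |>.trans_lt hfv).not_gt hu.2

end FirstPassage

namespace IsLevySubordinator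

variable {Ω : Type*} [MeasurableSpace Ω] {P : Measure Ω} {D : ℝ → Ω → ℝ} {φ : ℝ → ℝ}

theorem ae_exists_lt (h : IsLevySubordinator P D φ) (hφ : 0 < φ 1) :
    ∀ᵐ ω ∂P, ∀ c, ∃ u, 0 ≤ u ∧ c < D u ω := by
  have := h.isProbability
  have chernoff : ∀ (m : ℝ) (k : ℕ),
      P.real {ω | D k ω ≤ m} ≤ Real.exp m * Real.exp (-(k * φ 1)) := fun m k => by
    have hlap := h.laplace 1 k zero_le_one k.cast_nonneg
    simp only [one_mul] at hlap
    have hint : Integrable (fun ω => Real.exp (-1 * D k ω)) P :=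
      .of_integral_ne_zero (by simp only [neg_one_mul, hlap]; positivity)
    simpa [mgf, hlap] using measure_le_le_exp_mul_mgf m (by norm_num : (-1 : ℝ) ≤ 0) hint
  have bounded_null : ∀ m : ℕ, P {ω | ∀ k : ℕ, D k ω ≤ m} = 0 := fun m => by
    have hlim : Tendsto (fun k : ℕ => Real.exp m * Real.exp (-(k * φ 1))) atTop (nhds 0) := by
      simpa using (Real.tendsto_exp_atBot.comp (tendsto_neg_atTop_atBot.comp
        (tendsto_natCast_atTop_atTop.atTop_mul_const hφ))).const_mul (Real.exp m)
    refine (measureReal_eq_zero_iff).1 (le_antisymm (ge_of_tendsto' hlim fun k => ?_)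
      measureReal_nonneg)
    exact (measureReal_mono (show {ω | ∀ k : ℕ, D k ω ≤ m} ⊆ {ω | D k ω ≤ m} from
      fun ω hω => hω k)).trans (chernoff m k)
  filter_upwards [ae_all_iff.2 fun m => measure_eq_zero_iff_ae_notMem.1 (bounded_null m)]
    with ω hω c
  obtain ⟨m, hm⟩ := exists_nat_ge c
  obtain ⟨k, hk⟩ := not_forall.1 (hω m)
  exact ⟨k, k.cast_nonneg, hm.trans_lt (not_le.1 hk)⟩

theorem iIndepFun_increments (h : IsLevySubordinator P D φ) {n : ℕ} {s : Fin (n + 1) → ℝ}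
    (hs0 : s 0 = 0) (hmono : Monotone s) :
    iIndepFun (fun (i : Fin n) ω => D (s i.succ) ω - D (s i.castSucc) ω) P := by
  have hclamp : Monotone fun k => Fin.clamp k n := fun a b hab => by
    simp only [Fin.clamp, Fin.mk_le_mk]; omega
  convert h.indepIncrements n (fun k => s (Fin.clamp k n)) (by simpa [Fin.clamp] using hs0)
    (hmono.comp hclamp) using 6 <;> ext <;> simp [Fin.clamp]

theorem integral_exp_neg_mul_sub (h : IsLevySubordinator P D φ) {a b lam : ℝ} (ha : 0 ≤ a)
    (hab : a ≤ b) (hlam : 0 ≤ lam) :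
    ∫ ω, Real.exp (-(lam * (D b ω - D a ω))) ∂P = Real.exp (-((b - a) * φ lam)) := by
  have hf : Continuous fun x => Real.exp (-(lam * x)) := by fun_prop
  rw [← integral_map (f := fun x => Real.exp (-(lam * x))) (φ := fun ω => D b ω - D a ω)
      ((h.measurable b).sub (h.measurable a)).aemeasurable hf.aestronglyMeasurable,
    h.stationaryIncrements a b ha hab,
    integral_map (h.measurable _).aemeasurable hf.aestronglyMeasurable]
  exact h.laplace lam (b - a) hlam (sub_nonneg.2 hab)

theorem integral_exp_neg_sum_mul (h : IsLevySubordinator P D φ) {n : ℕ} {s : Fin (n + 1) → ℝ}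
    (hs0 : s 0 = 0) (hmono : Monotone s) {lam : Fin n → ℝ} (hlam : ∀ i, 0 ≤ lam i) :
    ∫ ω, Real.exp (-∑ i, lam i * D (s i.succ) ω) ∂P
      = Real.exp (-∑ i, φ (∑ j ∈ Finset.Ici i, lam j) * (s i.succ - s i.castSucc)) := by
  set Λ : Fin n → ℝ := fun i => ∑ j ∈ Finset.Ici i, lam j
  have hs_nonneg : ∀ i, 0 ≤ s i := fun i => hs0 ▸ hmono (Fin.zero_le i)
  have by_parts : ∀ᵐ ω ∂P, Real.exp (-∑ i, lam i * D (s i.succ) ω)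
      = ∏ i, Real.exp (-(Λ i * (D (s i.succ) ω - D (s i.castSucc) ω))) := by
    filter_upwards [h.init] with ω h0
    rw [← exp_neg_sum_mul_eq_prod, Fin.sum_Ici_mul_succ_sub_castSucc lam fun j => D (s j) ω]
    simp [hs0, h0]
  rw [integral_congr_ae by_parts, (h.iIndepFun_increments hs0 hmono).integral_fun_prod_comp
      (f := fun i x => Real.exp (-(Λ i * x)))
      (fun i => ((h.measurable _).sub (h.measurable _)).aemeasurable)
      (fun i => (by fun_prop : Continuous _).aestronglyMeasurable)]
  rw [Finset.prod_congr rfl fun i _ => h.integral_exp_neg_mul_sub (hs_nonneg _)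
    (hmono (Fin.castSucc_le_succ i)) (Finset.sum_nonneg fun j _ => hlam j), ← Real.exp_sum,
    ← Finset.sum_neg_distrib]
  simp_rw [mul_comm]

theorem ae_lt_sInf_setOf_lt (h : IsLevySubordinator P D φ) (hφ : 0 < φ 1) :
    ∀ᵐ ω ∂P, ∀ s t, 0 ≤ s → D s ω < t → s < sInf {u | 0 ≤ u ∧ t < D u ω} := by
  filter_upwards [h.mono, h.rightCont, h.ae_exists_lt hφ] with ω hmono hcont hunbdd s t hs hst
  exact lt_sInf_setOf_lt hmono (hcont s hs) (hunbdd t) hs hst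

theorem setIntegral_exp_neg_sum_mul_measureReal (h : IsLevySubordinator P D φ) {n : ℕ}
    {s : Fin (n + 1) → ℝ} (hs0 : s 0 = 0) (hmono : Monotone s) {lam : Fin n → ℝ}
    (hlam : ∀ i, 0 < lam i) {S : Set (ℝ × ℝ)} (hS : MeasurableSet S)
    (hlt : ∀ x y, x < y → (x, y) ∈ S) (hle : ∀ x y, (x, y) ∈ S → x ≤ y) :
    ∫ t in {t : Fin n → ℝ | ∀ i, 0 ≤ t i},
        Real.exp (-∑ i, lam i * t i) * P.real {ω | ∀ i, (D (s i.succ) ω, t i) ∈ S}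
      = (∏ i, lam i)⁻¹ *
          Real.exp (-∑ i, φ (∑ j ∈ Finset.Ici i, lam j) * (s i.succ - s i.castSucc)) := by
  have := h.isProbability
  have hX0 : ∀ᵐ ω ∂P, ∀ i, 0 ≤ D (s (Fin.succ i)) ω := by
    filter_upwards [h.nonneg] with ω hω i using hω _ (hs0 ▸ hmono (Fin.zero_le _))
  rw [integral_exp_neg_sum_mul_measureReal (fun i => h.measurable _) hX0 hS hlt hle hlam,
    h.integral_exp_neg_sum_mul hs0 hmono fun i => (hlam i).le]

end IsLevySubordinator

/-- For a Lévy subordinator `D` (not identically zero) with inverse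
`E t = inf {s ≥ 0 : D s > t}`, `λ₁,…,λₙ > 0` and `0 = s₀ ≤ s₁ ≤ ⋯ ≤ sₙ`,
`∫_{ℝⁿ≥0} exp(−Σᵢ λᵢ tᵢ) P[E tᵢ > sᵢ, i = 1,…,n] dt
  = (Πᵢ λᵢ)⁻¹ exp(−Σᵢ φ(λᵢ + ⋯ + λₙ)(sᵢ − sᵢ₋₁))`. -/
theorem laplace_transform_tail_closed_form {Ω : Type*} [MeasurableSpace Ω]
    (P : Measure Ω) (D : ℝ → Ω → ℝ) (φ : ℝ → ℝ)
    (h : IsLevySubordinator P D φ)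
    (hφ : ∀ lam : ℝ, 0 < lam → 0 < φ lam)
    (E : ℝ → Ω → ℝ) (hE : ∀ t ω, E t ω = sInf {u : ℝ | 0 ≤ u ∧ t < D u ω})
    (n : ℕ) (s : Fin (n + 1) → ℝ) (hs0 : s 0 = 0) (hmono : Monotone s)
    (lam : Fin n → ℝ) (hlam : ∀ i, 0 < lam i) :
    ∫ t in {t : Fin n → ℝ | ∀ i, 0 ≤ t i},
        Real.exp (-∑ i, lam i * t i) *
          (P {ω | ∀ i : Fin n, s i.succ < E (t i) ω}).toReal
      = (∏ i, lam i)⁻¹ * Real.exp (-∑ i : Fin n,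
          φ (∑ j ∈ Finset.Ici i, lam j) * (s i.succ - s i.castSucc)) := by
  have := h.isProbability
  simp only [hE]
  have hs_nonneg : ∀ i, 0 ≤ s i := fun i => hs0 ▸ hmono (Fin.zero_le i)
  have hle := h.setIntegral_exp_neg_sum_mul_measureReal hs0 hmono hlam measurableSet_le'
    (fun _ _ => le_of_lt) fun _ _ => id
  have hlt := h.setIntegral_exp_neg_sum_mul_measureReal hs0 hmono hlam measurableSet_lt'
    (fun _ _ => id) fun _ _ hxy => hxy.le
  rw [← hle]
  refine integral_eq_of_ae_le_of_ae_le
    (integrableOn_exp_neg_sum_mul_measureReal (fun i => h.measurable _) measurableSet_lt' hlam)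
    (integrableOn_exp_neg_sum_mul_measureReal (fun i => h.measurable _) measurableSet_le' hlam)
    (ae_of_all _ fun t => ?_) (ae_of_all _ fun t => ?_) (hlt.trans hle.symm)
  · refine mul_le_mul_of_nonneg_left (ENNReal.toReal_mono (measure_ne_top _ _)
      (measure_mono_ae ?_)) (Real.exp_pos _).le
    filter_upwards [h.ae_lt_sInf_setOf_lt (hφ 1 one_pos)] with ω hω hD i
      using hω _ _ (hs_nonneg _) (hD i)
  · exact mul_le_mul_of_nonneg_left (measureReal_mono fun ω hω i =>
      le_of_lt_sInf_setOf_lt (hs_nonneg _) (hω i)) (Real.exp_pos _).le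
end

section
/- Let D be a Lévy subordinator with Laplace exponent φ, not identically zero, and let E(t) = inf{ s ≥ 0 : D(s) > t } be its inverse. Then for every γ > 0 and every λ > 0: ∫₀^∞ e^{−λt} · 𝔼[E(t)^γ] dt = Γ(1 + γ) / (λ · φ(λ)^γ), where Γ is the Gamma function. In particular, for γ = 1, the function U(t) = 𝔼[E(t)] has Laplace transform ∫₀^∞ e^{−λt} U(t) dt = 1/(λ·φ(λ)). -/
/-!
On a path `D` that is nondecreasing, right-continuous and unbounded, the layer-cake formula reads
`E(t)^γ = ∫₀^∞ γ s^(γ-1) 1{D(s) ≤ t} ds`. Multiply by `e^{-λt}`, take expectations and integrate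
over `t`; after exchanging the three integrals (Tonelli), the `t`-integral over `t ≥ D(s)` is
`e^{-λ D(s)} / λ`, whose expectation is `e^{-s φ(λ)} / λ`, and what remains is the Gamma integral
`∫₀^∞ γ s^(γ-1) e^{-s φ(λ)} ds / λ = Γ(1+γ) / (λ φ(λ)^γ)`.
-/

open Filter MeasureTheory ProbabilityTheory Set

open Real Topology
open scoped ENNReal

lemma lintegral_exp_neg_mul_Ici {lam : ℝ} (hlam : 0 < lam) (d : ℝ) :
    ∫⁻ t in Ici d, ENNReal.ofReal (exp (-(lam * t))) = ENNReal.ofReal (exp (-(lam * d)) / lam) := by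
  have hint : IntegrableOn (fun t => exp (-(lam * t))) (Ici d) := by
    rw [integrableOn_Ici_iff_integrableOn_Ioi]
    simpa only [neg_mul] using exp_neg_integrableOn_Ioi d hlam
  rw [← ofReal_integral_eq_lintegral_ofReal hint (ae_of_all _ fun t => (exp_pos _).le),
    integral_Ici_eq_integral_Ioi,
    integral_comp_mul_left_Ioi (fun y => exp (-y)) d hlam, integral_exp_neg_Ioi, smul_eq_mul,
    inv_mul_eq_div]

lemma lintegral_mul_rpow_sub_one_Ioc {γ e : ℝ} (hγ : 0 < γ) (he : 0 ≤ e) :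
    ∫⁻ s in Ioc 0 e, ENNReal.ofReal (γ * s ^ (γ - 1)) = ENNReal.ofReal (e ^ γ) := by
  have hint : IntegrableOn (fun s : ℝ => γ * s ^ (γ - 1)) (Ioc 0 e) :=
    ((intervalIntegrable_iff_integrableOn_Ioc_of_le he).1
      (intervalIntegral.intervalIntegrable_rpow' (by linarith))).const_mul γ
  have hnonneg : ∀ᵐ s ∂volume.restrict (Ioc 0 e), 0 ≤ γ * s ^ (γ - 1) := by
    filter_upwards [ae_restrict_mem measurableSet_Ioc] with s hs
    exact mul_nonneg hγ.le (rpow_nonneg hs.1.le _)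
  rw [← ofReal_integral_eq_lintegral_ofReal hint hnonneg, integral_const_mul,
    ← intervalIntegral.integral_of_le he, integral_rpow (Or.inl (by linarith)), sub_add_cancel,
    zero_rpow hγ.ne', sub_zero, mul_div_cancel₀ _ hγ.ne']

lemma lintegral_rpow_sub_one_mul_exp_neg_mul_Ioi {γ b : ℝ} (hγ : 0 < γ) (hb : 0 < b) :
    ∫⁻ s in Ioi 0, ENNReal.ofReal (s ^ (γ - 1) * exp (-(b * s)))
      = ENNReal.ofReal (Gamma γ / b ^ γ) := by
  have hint : IntegrableOn (fun s : ℝ => s ^ (γ - 1) * exp (-(b * s))) (Ioi 0) := by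
    simpa only [Real.rpow_one, neg_mul] using
      integrableOn_rpow_mul_exp_neg_mul_rpow (s := γ - 1) (by linarith) zero_lt_one hb
  have hnonneg : ∀ᵐ s ∂volume.restrict (Ioi 0), 0 ≤ s ^ (γ - 1) * exp (-(b * s)) := by
    filter_upwards [ae_restrict_mem measurableSet_Ioi] with s hs
    exact mul_nonneg (rpow_nonneg (le_of_lt hs) _) (exp_pos _).le
  rw [← ofReal_integral_eq_lintegral_ofReal hint hnonneg,
    integral_rpow_mul_exp_neg_mul_Ioi hγ hb, div_rpow zero_le_one hb.le, Real.one_rpow]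
  ring_nf

section Path

noncomputable def firstPassage (f : ℝ → ℝ) (t : ℝ) : ℝ := sInf {u | 0 ≤ u ∧ t < f u}

structure IsSubordinatorPath (f : ℝ → ℝ) : Prop where
  mono : MonotoneOn f (Ici 0)
  nonneg : ∀ s, 0 ≤ s → 0 ≤ f s
  rightCont : ∀ s, 0 ≤ s → ContinuousWithinAt f (Ici s) s

/-- Unlike `D` itself, `(s, ω) ↦ ratRightLim (D · ω) s` is jointly measurable. -/
noncomputable def ratRightLim (f : ℝ → ℝ) (s : ℝ) : ℝ≥0∞ :=
  ⨅ q : ℚ, if s < q then ENNReal.ofReal (f q) else ⊤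

/-- The integrand of `E(t)^γ = ∫₀^∞ γ s^(γ-1) 1{f s ≤ t} ds`, with `f` replaced by
`ratRightLim f`. -/
noncomputable def passageKernel (f : ℝ → ℝ) (γ t s : ℝ) : ℝ≥0∞ :=
  if ratRightLim f s ≤ ENNReal.ofReal t then ENNReal.ofReal (γ * s ^ (γ - 1)) else 0

variable {f : ℝ → ℝ}

lemma firstPassage_nonneg (f : ℝ → ℝ) (t : ℝ) : 0 ≤ firstPassage f t :=
  Real.sInf_nonneg fun _ hu => hu.1

lemma le_of_lt_firstPassage {s t : ℝ} (hs : 0 ≤ s) (hsE : s < firstPassage f t) : f s ≤ t := by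
  by_contra! h
  have hEs : firstPassage f t ≤ s := csInf_le ⟨0, fun _ hu => hu.1⟩ ⟨hs, h⟩
  exact hEs.not_gt hsE

lemma lt_of_firstPassage_lt (hf : MonotoneOn f (Ici 0)) {s t : ℝ}
    (hub : ∃ u, 0 ≤ u ∧ t < f u) (hsE : firstPassage f t < s) : t < f s := by
  obtain ⟨u, ⟨hu, htu⟩, hus⟩ := exists_lt_of_csInf_lt hub hsE
  exact htu.trans_le (hf hu (hu.trans hus.le) hus.le)

lemma IsSubordinatorPath.ratRightLim_eq (hf : IsSubordinatorPath f) {s : ℝ} (hs : 0 ≤ s) :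
    ratRightLim f s = ENNReal.ofReal (f s) := by
  refine le_antisymm (ENNReal.le_of_forall_pos_le_add fun ε hε _ => ?_) (le_iInf fun q => ?_)
  · have hev : ∀ᶠ u in 𝓝[≥] s, f u < f s + ε :=
      hf.rightCont s hs (Iio_mem_nhds (lt_add_of_pos_right _ (by exact_mod_cast hε)))
    obtain ⟨u, hsu, hsub⟩ := mem_nhdsGE_iff_exists_Ico_subset.1 hev
    obtain ⟨q, hsq, hqu⟩ := exists_rat_btwn (mem_Ioi.1 hsu)
    calc ratRightLim f s ≤ ENNReal.ofReal (f q) := (iInf_le _ q).trans_eq (if_pos hsq)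
      _ ≤ ENNReal.ofReal (f s + ε) := ENNReal.ofReal_le_ofReal (hsub ⟨hsq.le, hqu⟩).le
      _ = ENNReal.ofReal (f s) + ε := by
        rw [ENNReal.ofReal_add (hf.nonneg s hs) ε.coe_nonneg, ENNReal.ofReal_coe_nnreal]
  · split_ifs with hsq
    · exact ENNReal.ofReal_le_ofReal (hf.mono hs (hs.trans hsq.le) hsq.le)
    · exact le_top

lemma measurable_ratRightLim {Ω : Type*} [MeasurableSpace Ω] {D : ℝ → Ω → ℝ}
    (hD : ∀ s, Measurable (D s)) : Measurable fun p : ℝ × Ω => ratRightLim (D · p.2) p.1 :=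
  .iInf fun q => .ite (measurableSet_lt measurable_fst measurable_const)
    ((hD q).comp measurable_snd).ennreal_ofReal measurable_const

lemma measurable_passageKernel {Ω : Type*} [MeasurableSpace Ω] {D : ℝ → Ω → ℝ}
    (hD : ∀ s, Measurable (D s)) (γ : ℝ) :
    Measurable fun z : ℝ × Ω × ℝ => passageKernel (D · z.2.1) γ z.1 z.2.2 :=
  .ite (measurableSet_le ((measurable_ratRightLim hD).comp
      (measurable_snd.snd.prodMk measurable_snd.fst)) measurable_fst.ennreal_ofReal)
    ((measurable_snd.snd.pow_const _).const_mul γ).ennreal_ofReal measurable_const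

lemma IsSubordinatorPath.passageKernel_eq_ite (hf : IsSubordinatorPath f) {γ t s : ℝ}
    (ht : 0 ≤ t) (hs : 0 ≤ s) :
    passageKernel f γ t s = if f s ≤ t then ENNReal.ofReal (γ * s ^ (γ - 1)) else 0 := by
  simp only [passageKernel, hf.ratRightLim_eq hs, ENNReal.ofReal_le_ofReal_iff ht]

lemma IsSubordinatorPath.setLIntegral_passageKernel (hf : IsSubordinatorPath f) {γ t : ℝ}
    (hγ : 0 < γ) (ht : 0 ≤ t) (hub : ∃ u, 0 ≤ u ∧ t < f u) :
    ∫⁻ s in Ioi 0, passageKernel f γ t s = ENNReal.ofReal (firstPassage f t ^ γ) := by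
  have hkernel : ∀ᵐ s, s ∈ Ioi 0 → passageKernel f γ t s
      = (Iic (firstPassage f t)).indicator (fun s => ENNReal.ofReal (γ * s ^ (γ - 1))) s := by
    filter_upwards [Measure.ae_ne volume (firstPassage f t)] with s hsE hs
    rw [hf.passageKernel_eq_ite ht (le_of_lt hs)]
    rcases hsE.lt_or_gt with hlt | hgt
    · rw [if_pos (le_of_lt_firstPassage (le_of_lt hs) hlt), indicator_of_mem (mem_Iic.2 hlt.le)]
    · rw [if_neg (lt_of_firstPassage_lt hf.mono hub hgt).not_ge,
        indicator_of_notMem (notMem_Iic.2 hgt)]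
  rw [setLIntegral_congr_fun_ae measurableSet_Ioi hkernel, lintegral_indicator measurableSet_Iic,
    Measure.restrict_restrict measurableSet_Iic, Iic_inter_Ioi,
    lintegral_mul_rpow_sub_one_Ioc hγ (firstPassage_nonneg f t)]

lemma IsSubordinatorPath.setLIntegral_exp_neg_mul_passageKernel (hf : IsSubordinatorPath f)
    {γ lam s : ℝ} (hlam : 0 < lam) (hs : 0 ≤ s) :
    ∫⁻ t in Ici 0, ENNReal.ofReal (exp (-(lam * t))) * passageKernel f γ t s
      = ENNReal.ofReal (exp (-(lam * f s)) / lam) * ENNReal.ofReal (γ * s ^ (γ - 1)) := by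
  have hkernel : ∀ t ∈ Ici (0 : ℝ), ENNReal.ofReal (exp (-(lam * t))) * passageKernel f γ t s
      = (Ici (f s)).indicator (fun t => ENNReal.ofReal (exp (-(lam * t)))) t
        * ENNReal.ofReal (γ * s ^ (γ - 1)) := by
    intro t ht
    rw [hf.passageKernel_eq_ite ht hs]
    by_cases hst : f s ≤ t <;> simp [hst]
  rw [setLIntegral_congr_fun measurableSet_Ici hkernel,
    lintegral_mul_const' _ _ ENNReal.ofReal_ne_top,
    lintegral_indicator measurableSet_Ici, Measure.restrict_restrict measurableSet_Ici,
    Ici_inter_Ici, max_eq_left (hf.nonneg s hs), lintegral_exp_neg_mul_Ici hlam]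

end Path

lemma lintegral_lintegral_lintegral_swap {α β δ : Type*} [MeasurableSpace α] [MeasurableSpace β]
    [MeasurableSpace δ] {μ : Measure α} {ν : Measure β} {ρ : Measure δ} [SFinite μ] [SFinite ν]
    [SFinite ρ] {f : α → β → δ → ℝ≥0∞} (hf : Measurable fun z : α × β × δ => f z.1 z.2.1 z.2.2) :
    ∫⁻ x, ∫⁻ y, ∫⁻ z, f x y z ∂ρ ∂ν ∂μ = ∫⁻ z, ∫⁻ y, ∫⁻ x, f x y z ∂μ ∂ν ∂ρ := by
  have hyz : ∀ x, Measurable fun p : β × δ => f x p.1 p.2 :=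
    fun x => hf.comp (measurable_const.prodMk measurable_id)
  have hxy : ∀ z, Measurable fun p : α × β => f p.1 p.2 z :=
    fun z => hf.comp (measurable_fst.prodMk (measurable_snd.prodMk measurable_const))
  have hxz : Measurable fun p : α × δ => ∫⁻ y, f p.1 y p.2 ∂ν :=
    Measurable.lintegral_prod_right' (f := fun r : (α × δ) × β => f r.1.1 r.2 r.1.2)
      (hf.comp (measurable_fst.fst.prodMk (measurable_snd.prodMk measurable_fst.snd)))
  calc ∫⁻ x, ∫⁻ y, ∫⁻ z, f x y z ∂ρ ∂ν ∂μ = ∫⁻ x, ∫⁻ z, ∫⁻ y, f x y z ∂ν ∂ρ ∂μ :=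
        lintegral_congr fun x => lintegral_lintegral_swap (hyz x).aemeasurable
    _ = ∫⁻ z, ∫⁻ x, ∫⁻ y, f x y z ∂ν ∂μ ∂ρ := lintegral_lintegral_swap hxz.aemeasurable
    _ = ∫⁻ z, ∫⁻ y, ∫⁻ x, f x y z ∂μ ∂ν ∂ρ :=
        lintegral_congr fun z => lintegral_lintegral_swap (hxy z).aemeasurable

namespace IsLevySubordinator

variable {Ω : Type*} [MeasurableSpace Ω] {P : Measure Ω} {D : ℝ → Ω → ℝ} {φ : ℝ → ℝ}

lemma lintegral_exp_neg_mul (h : IsLevySubordinator P D φ) {lam s : ℝ} (hlam : 0 ≤ lam)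
    (hs : 0 ≤ s) :
    ∫⁻ ω, ENNReal.ofReal (exp (-(lam * D s ω))) ∂P = ENNReal.ofReal (exp (-(s * φ lam))) := by
  have := h.isProbability
  have hint : Integrable (fun ω => exp (-(lam * D s ω))) P := by
    refine (integrable_const 1).mono'
      ((h.measurable s).const_mul lam).neg.exp.aestronglyMeasurable ?_
    filter_upwards [h.nonneg] with ω hω
    rw [norm_of_nonneg (exp_pos _).le, exp_le_one_iff, neg_nonpos]
    exact mul_nonneg hlam (hω s hs)
  rw [← ofReal_integral_eq_lintegral_ofReal hint (ae_of_all _ fun _ => (exp_pos _).le),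
    h.laplace lam s hlam hs]

lemma ae_isSubordinatorPath (h : IsLevySubordinator P D φ) :
    ∀ᵐ ω ∂P, IsSubordinatorPath (D · ω) := by
  filter_upwards [h.mono, h.nonneg, h.rightCont] with ω hmono hnonneg hrc
  exact ⟨hmono, hnonneg, hrc⟩

/-- By Fatou, `∫ liminf e^{-c D(m)} ≤ lim e^{-m φ(c)} = 0`. -/
lemma ae_forall_exists_lt (h : IsLevySubordinator P D φ) {c : ℝ} (hc : 0 < c) (hφc : 0 < φ c) :
    ∀ᵐ ω ∂P, ∀ t, ∃ u, 0 ≤ u ∧ t < D u ω := by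
  set X : ℕ → Ω → ℝ≥0∞ := fun m ω => ENNReal.ofReal (exp (-(c * D m ω)))
  have hX : ∀ m, Measurable (X m) := fun m => ((h.measurable m).const_mul c).neg.exp.ennreal_ofReal
  have hlim : Tendsto (fun m => ∫⁻ ω, X m ω ∂P) atTop (𝓝 0) := by
    simp only [X, h.lintegral_exp_neg_mul hc.le (Nat.cast_nonneg _)]
    rw [← ENNReal.ofReal_zero]
    exact ENNReal.tendsto_ofReal (tendsto_exp_atBot.comp (tendsto_neg_atTop_atBot.comp
      (tendsto_natCast_atTop_atTop.atTop_mul_const hφc)))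
  have hliminf : ∫⁻ ω, liminf (fun m => X m ω) atTop ∂P = 0 :=
    le_antisymm ((lintegral_liminf_le hX).trans hlim.liminf_eq.le) bot_le
  filter_upwards [(lintegral_eq_zero_iff (.liminf hX)).1 hliminf] with ω hω t
  have hlt : liminf (fun m => X m ω) atTop < ENNReal.ofReal (exp (-(c * t))) := by
    rw [hω, Pi.zero_apply, ENNReal.ofReal_pos]
    exact exp_pos _
  obtain ⟨m, hm⟩ := (frequently_lt_of_liminf_lt (by isBoundedDefault) hlt).exists
  rw [ENNReal.ofReal_lt_ofReal_iff (exp_pos _), exp_lt_exp, neg_lt_neg_iff] at hm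
  exact ⟨m, m.cast_nonneg, lt_of_mul_lt_mul_left hm hc.le⟩

lemma measurable_setLIntegral_passageKernel (h : IsLevySubordinator P D φ) (γ : ℝ) :
    Measurable fun p : ℝ × Ω => ∫⁻ s in Ioi 0, passageKernel (D · p.2) γ p.1 s :=
  Measurable.lintegral_prod_right'
    (f := fun r : (ℝ × Ω) × ℝ => passageKernel (D · r.1.2) γ r.1.1 r.2)
    ((measurable_passageKernel h.measurable γ).comp
      (measurable_fst.fst.prodMk (measurable_fst.snd.prodMk measurable_snd)))

lemma integral_rpow_firstPassage (h : IsLevySubordinator P D φ) {c γ t : ℝ} (hc : 0 < c)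
    (hφc : 0 < φ c) (hγ : 0 < γ) (ht : 0 ≤ t) :
    ∫ ω, firstPassage (D · ω) t ^ γ ∂P
      = (∫⁻ ω, (∫⁻ s in Ioi 0, passageKernel (D · ω) γ t s) ∂P).toReal := by
  have hpath : ∀ᵐ ω ∂P, ∫⁻ s in Ioi 0, passageKernel (D · ω) γ t s
      = ENNReal.ofReal (firstPassage (D · ω) t ^ γ) := by
    filter_upwards [h.ae_isSubordinatorPath, h.ae_forall_exists_lt hc hφc] with ω hω hub
    exact hω.setLIntegral_passageKernel hγ ht (hub t)
  have hmeas : Measurable fun ω => ∫⁻ s in Ioi 0, passageKernel (D · ω) γ t s :=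
    (h.measurable_setLIntegral_passageKernel γ).comp (measurable_const.prodMk measurable_id)
  rw [← integral_toReal hmeas.aemeasurable (hpath.mono fun ω hω => hω ▸ ENNReal.ofReal_lt_top)]
  refine integral_congr_ae (hpath.mono fun ω hω => ?_)
  dsimp only
  rw [hω, ENNReal.toReal_ofReal (rpow_nonneg (firstPassage_nonneg _ t) γ)]

lemma setLIntegral_exp_neg_mul_lintegral_passageKernel (h : IsLevySubordinator P D φ)
    {γ lam : ℝ} (hγ : 0 < γ) (hlam : 0 < lam) (hφ : 0 < φ lam) :
    ∫⁻ t in Ici 0, ENNReal.ofReal (exp (-(lam * t)))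
        * ∫⁻ ω, (∫⁻ s in Ioi 0, passageKernel (D · ω) γ t s) ∂P
      = ENNReal.ofReal (Gamma (1 + γ) / (lam * φ lam ^ γ)) := by
  have := h.isProbability
  have hmeas : Measurable fun z : ℝ × Ω × ℝ =>
      ENNReal.ofReal (exp (-(lam * z.1))) * passageKernel (D · z.2.1) γ z.1 z.2.2 :=
    (measurable_fst.const_mul lam).neg.exp.ennreal_ofReal.mul
      (measurable_passageKernel h.measurable γ)
  have hinner : ∀ s ∈ Ioi (0 : ℝ), ∫⁻ ω, ENNReal.ofReal (exp (-(lam * D s ω)) / lam)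
      * ENNReal.ofReal (γ * s ^ (γ - 1)) ∂P
      = ENNReal.ofReal (γ / lam) * ENNReal.ofReal (s ^ (γ - 1) * exp (-(φ lam * s))) := by
    intro s hs
    have hmove : ∀ x, 0 ≤ x → ENNReal.ofReal (x / lam) * ENNReal.ofReal (γ * s ^ (γ - 1))
        = ENNReal.ofReal x * ENNReal.ofReal (γ * s ^ (γ - 1) / lam) := fun x hx => by
      rw [← ENNReal.ofReal_mul (div_nonneg hx hlam.le), ← ENNReal.ofReal_mul hx]
      ring_nf
    simp_rw [hmove _ (exp_pos _).le]
    rw [lintegral_mul_const' _ _ ENNReal.ofReal_ne_top,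
      h.lintegral_exp_neg_mul hlam.le (le_of_lt hs),
      ← ENNReal.ofReal_mul (exp_pos _).le, ← ENNReal.ofReal_mul (div_nonneg hγ.le hlam.le)]
    congr 1
    rw [mul_comm s]
    ring
  calc ∫⁻ t in Ici 0, ENNReal.ofReal (exp (-(lam * t)))
        * ∫⁻ ω, (∫⁻ s in Ioi 0, passageKernel (D · ω) γ t s) ∂P
      = ∫⁻ t in Ici 0, ∫⁻ ω, (∫⁻ s in Ioi 0,
          ENNReal.ofReal (exp (-(lam * t))) * passageKernel (D · ω) γ t s) ∂P := by
        simp_rw [lintegral_const_mul' _ _ ENNReal.ofReal_ne_top]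
    _ = ∫⁻ s in Ioi 0, ∫⁻ ω, (∫⁻ t in Ici 0,
          ENNReal.ofReal (exp (-(lam * t))) * passageKernel (D · ω) γ t s) ∂P :=
        lintegral_lintegral_lintegral_swap hmeas
    _ = ∫⁻ s in Ioi 0, ∫⁻ ω, ENNReal.ofReal (exp (-(lam * D s ω)) / lam)
          * ENNReal.ofReal (γ * s ^ (γ - 1)) ∂P := by
        refine setLIntegral_congr_fun measurableSet_Ioi fun s hs => lintegral_congr_ae ?_
        filter_upwards [h.ae_isSubordinatorPath] with ω hω
        exact hω.setLIntegral_exp_neg_mul_passageKernel hlam (le_of_lt hs)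
    _ = ∫⁻ s in Ioi 0, ENNReal.ofReal (γ / lam)
          * ENNReal.ofReal (s ^ (γ - 1) * exp (-(φ lam * s))) :=
        setLIntegral_congr_fun measurableSet_Ioi hinner
    _ = ENNReal.ofReal (Gamma (1 + γ) / (lam * φ lam ^ γ)) := by
        rw [lintegral_const_mul' _ _ ENNReal.ofReal_ne_top,
          lintegral_rpow_sub_one_mul_exp_neg_mul_Ioi hγ hφ,
          ← ENNReal.ofReal_mul (div_nonneg hγ.le hlam.le), add_comm, Gamma_add_one hγ.ne']
        congr 1
        field_simp

theorem setIntegral_exp_neg_mul_integral_rpow_firstPassage (h : IsLevySubordinator P D φ)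
    {γ lam : ℝ} (hγ : 0 < γ) (hlam : 0 < lam) (hφ : 0 < φ lam) :
    ∫ t in Ioi 0, exp (-(lam * t)) * ∫ ω, firstPassage (D · ω) t ^ γ ∂P
      = Gamma (1 + γ) / (lam * φ lam ^ γ) := by
  have := h.isProbability
  set M : ℝ → ℝ≥0∞ := fun t => ∫⁻ ω, (∫⁻ s in Ioi 0, passageKernel (D · ω) γ t s) ∂P
  have hmeas : Measurable fun t => ENNReal.ofReal (exp (-(lam * t))) * M t :=
    (measurable_id.const_mul lam).neg.exp.ennreal_ofReal.mul
      (h.measurable_setLIntegral_passageKernel γ).lintegral_prod_right'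
  have hlint : ∫⁻ t in Ioi 0, ENNReal.ofReal (exp (-(lam * t))) * M t
      = ENNReal.ofReal (Gamma (1 + γ) / (lam * φ lam ^ γ)) := by
    rw [setLIntegral_congr Ioi_ae_eq_Ici]
    exact h.setLIntegral_exp_neg_mul_lintegral_passageKernel hγ hlam hφ
  calc ∫ t in Ioi 0, exp (-(lam * t)) * ∫ ω, firstPassage (D · ω) t ^ γ ∂P
      = ∫ t in Ioi 0, (ENNReal.ofReal (exp (-(lam * t))) * M t).toReal := by
        refine setIntegral_congr_fun measurableSet_Ioi fun t ht => ?_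
        rw [h.integral_rpow_firstPassage hlam hφ hγ (le_of_lt ht), ENNReal.toReal_mul,
          ENNReal.toReal_ofReal (exp_pos _).le]
    _ = (∫⁻ t in Ioi 0, ENNReal.ofReal (exp (-(lam * t))) * M t).toReal :=
        integral_toReal hmeas.aemeasurable (ae_lt_top hmeas (hlint ▸ ENNReal.ofReal_ne_top))
    _ = Gamma (1 + γ) / (lam * φ lam ^ γ) := by
        rw [hlint, ENNReal.toReal_ofReal (by positivity)]

end IsLevySubordinator

/-- For a Lévy subordinator `D` with Laplace exponent `φ` not
identically zero, and inverse `E t = inf {s ≥ 0 : D s > t}`: for `γ, λ > 0`,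
`∫₀^∞ e^{−λt} 𝔼[(E t)^γ] dt = Γ(1+γ)/(λ φ(λ)^γ)`; in particular, for
`U t = 𝔼[E t]`, `∫₀^∞ e^{−λt} U(t) dt = 1/(λ φ(λ))`. -/
theorem inverse_subordinator_moment_laplace {Ω : Type*} [MeasurableSpace Ω]
    (P : Measure Ω) (D : ℝ → Ω → ℝ) (φ : ℝ → ℝ)
    (h : IsLevySubordinator P D φ)
    (hφ : ∀ lam : ℝ, 0 < lam → 0 < φ lam)
    (E : ℝ → Ω → ℝ) (hE : ∀ t ω, E t ω = sInf {u : ℝ | 0 ≤ u ∧ t < D u ω})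
    (γ lam : ℝ) (hγ : 0 < γ) (hlam : 0 < lam) :
    (∫ t in Ioi (0 : ℝ), Real.exp (-(lam * t)) * (∫ ω, E t ω ^ γ ∂P))
        = Real.Gamma (1 + γ) / (lam * φ lam ^ γ) ∧
    (∫ t in Ioi (0 : ℝ), Real.exp (-(lam * t)) * (∫ ω, E t ω ∂P))
        = 1 / (lam * φ lam) := by
  obtain rfl : E = fun t ω => firstPassage (D · ω) t := funext fun t => funext (hE t)
  have hmoment := fun p (hp : 0 < p) =>
    h.setIntegral_exp_neg_mul_integral_rpow_firstPassage hp hlam (hφ lam hlam)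
  refine ⟨hmoment γ hγ, ?_⟩
  simpa only [rpow_one, one_add_one_eq_two, Gamma_two] using hmoment 1 one_pos
end
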